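/- arXiv:2605.19469 — 3 statements merged into one kernel-verified Lean document; each statement's English description precedes it below -/
import Mathlib

section
/- Let d_z ≥ 1, N ≥ 1, d_x ≥ 1 be integers and σ_w > 0, L_k ≥ 0 reals. Let k : ℝ^{d_z} × ℝ^{d_z} → ℝ be a symmetric positive semidefinite kernel (every finite Gram matrix is positive semidefinite) that is L_k-Lipschitz in each argument, i.e. |k(z, w) − k(z', w)| ≤ L_k ‖z − z'‖ for all z, z', w. Fix data points z_1, …, z_N ∈ ℝ^{d_z}, and let σ_N²(z) := k(z, z) − k_v(z)ᵀ (K + σ_w² I_N)⁻¹ k_v(z) be the Gaussian process posterior variance, where K is the N×N Gram matrix K_{ij} = k(z_i, z_j) and k_v(z) ∈ ℝ^N has entries k(z_i, z). Define s(z) := √(d_x) · √(σ_N²(z)). Then for all z, z' ∈ ℝ^{d_z}: |s(z) − s(z')| ≤ √(2 d_x L_k) · ‖z − z'‖^{1/2}. -/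
open Matrix

/-!
The posterior covariance `k_N(x, y) = k(x, y) - k_v(x)ᵀ (K + σ_w² I)⁻¹ k_v(y)` is again a positive
semidefinite kernel: its Gram matrices are Schur complements of the Gram matrices of `k` at the
data points followed by the query points, with the noise `σ_w² I` added to the data block. Hence
`σ_N(z) = √(k_N(z, z))` is the norm of a feature vector, and the reverse triangle inequality bounds
`|σ_N(z) - σ_N(z')|` by the kernel distance `√(k_N(z,z) - 2 k_N(z,z') + k_N(z',z'))`. Conditioning
only shrinks this distance, as `k - k_N` is positive semidefinite, and for `k` itself the Lipschitz
bound gives `k(z,z) - 2 k(z,z') + k(z',z') ≤ 2 L_k ‖z - z'‖`.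
-/

/-- `k` is a symmetric positive semidefinite kernel: every finite Gram matrix is PSD. -/
def IsPSDKernel {E : Type*} (k : E → E → ℝ) : Prop :=
  (∀ z w, k z w = k w z) ∧
    ∀ (m : ℕ) (v : Fin m → E) (c : Fin m → ℝ),
      0 ≤ ∑ i, ∑ j, c i * c j * k (v i) (v j)

/-- The Gram matrix of a kernel at points `zs`. -/
noncomputable def gramMatrix {E : Type*} (k : E → E → ℝ) {m : ℕ} (zs : Fin m → E) :
    Matrix (Fin m) (Fin m) ℝ :=
  Matrix.of fun i j => k (zs i) (zs j)

/-- The Gaussian process posterior variance at `z` given data points `zs` and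
noise variance `σw²`: `σ²(z) = k(z,z) − k_v(z)ᵀ (K + σw² I)⁻¹ k_v(z)`. -/
noncomputable def postVar {E : Type*} (k : E → E → ℝ) (σw : ℝ) {m : ℕ} (zs : Fin m → E)
    (z : E) : ℝ :=
  k z z - (fun i => k (zs i) z) ⬝ᵥ
    ((gramMatrix k zs + σw ^ 2 • (1 : Matrix (Fin m) (Fin m) ℝ))⁻¹ *ᵥ (fun i => k (zs i) z))

section Kernels

variable {E : Type*}

noncomputable def kernelMatrix {ι κ : Type*} (k : E → E → ℝ) (xs : ι → E) (ys : κ → E) :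
    Matrix ι κ ℝ :=
  of fun i j => k (xs i) (ys j)

theorem dotProduct_kernelMatrix_mulVec {ι : Type*} [Fintype ι] (k : E → E → ℝ) (xs : ι → E)
    (c : ι → ℝ) : c ⬝ᵥ kernelMatrix k xs xs *ᵥ c = ∑ i, ∑ j, c i * c j * k (xs i) (xs j) := by
  simp only [dotProduct, mulVec, kernelMatrix, of_apply, Finset.mul_sum]
  exact Finset.sum_congr rfl fun i _ => Finset.sum_congr rfl fun j _ => by ring

theorem isPSDKernel_iff (k : E → E → ℝ) : IsPSDKernel k ↔
    (∀ z w, k z w = k w z) ∧ ∀ (m : ℕ) (xs : Fin m → E), (kernelMatrix k xs xs).PosSemidef := by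
  refine and_congr_right fun hsymm => forall_congr' fun m => ⟨fun h xs => ?_, fun h xs c => ?_⟩
  · refine .of_dotProduct_mulVec_nonneg (by ext i j; exact hsymm _ _) fun c => ?_
    simpa only [star_trivial, dotProduct_kernelMatrix_mulVec] using h xs c
  · simpa only [star_trivial, dotProduct_kernelMatrix_mulVec] using (h xs).dotProduct_mulVec_nonneg c

namespace IsPSDKernel

variable {k : E → E → ℝ}

theorem posSemidef_kernelMatrix (hk : IsPSDKernel k) {ι : Type*} [Fintype ι] (xs : ι → E) :
    (kernelMatrix k xs xs).PosSemidef := by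
  let e := Fintype.equivFin ι
  convert ((isPSDKernel_iff k).1 hk).2 _ (xs ∘ e.symm) |>.submatrix e
  ext i j
  simp [kernelMatrix]

theorem apply_self_nonneg (hk : IsPSDKernel k) (x : E) : 0 ≤ k x x := by
  simpa using hk.2 1 ![x] ![1]

theorem sq_apply_le (hk : IsPSDKernel k) (x y : E) : k x y ^ 2 ≤ k x x * k y y := by
  have hquad : ∀ s : ℝ, 0 ≤ k x x * (s * s) + 2 * k x y * s + k y y := fun s => by
    have := hk.2 2 ![x, y] ![s, 1]
    simp only [Fin.sum_univ_two, Matrix.cons_val_zero, Matrix.cons_val_one, hk.1 y x] at this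
    linarith
  have := discrim_le_zero hquad
  rw [discrim] at this
  nlinarith

theorem abs_sqrt_sub_sqrt_le (hk : IsPSDKernel k) (x y : E) :
    |√(k x x) - √(k y y)| ≤ √(k x x - 2 * k x y + k y y) := by
  have hxx := hk.apply_self_nonneg x
  have hyy := hk.apply_self_nonneg y
  have hcs : k x y ≤ √(k x x) * √(k y y) := by
    rw [← Real.sqrt_mul hxx]
    exact (le_abs_self _).trans (Real.abs_le_sqrt (hk.sq_apply_le x y))
  rw [← Real.sqrt_sq_eq_abs]
  refine Real.sqrt_le_sqrt ?_
  nlinarith [Real.sq_sqrt hxx, Real.sq_sqrt hyy]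

end IsPSDKernel

theorem Matrix.IsHermitian.dotProduct_mulVec_comm {n : Type*} [Fintype n]
    {M : Matrix n n ℝ} (hM : M.IsHermitian) (v w : n → ℝ) :
    v ⬝ᵥ M *ᵥ w = w ⬝ᵥ M *ᵥ v := by
  rw [dotProduct_mulVec, ← mulVec_transpose, ← conjTranspose_eq_transpose_of_trivial, hM.eq,
    dotProduct_comm]

section Posterior

variable {k : E → E → ℝ} {σw : ℝ} {m : ℕ}

theorem IsPSDKernel.posDef_gramMatrix_add_smul_one (hk : IsPSDKernel k) (hσ : σw ≠ 0)
    (zs : Fin m → E) : (gramMatrix k zs + σw ^ 2 • (1 : Matrix (Fin m) (Fin m) ℝ)).PosDef :=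
  PosDef.posSemidef_add (hk.posSemidef_kernelMatrix zs) (PosDef.one.smul (by positivity))

noncomputable def postCov (k : E → E → ℝ) (σw : ℝ) {m : ℕ} (zs : Fin m → E) (x y : E) : ℝ :=
  k x y - (fun i => k (zs i) x) ⬝ᵥ
    ((gramMatrix k zs + σw ^ 2 • (1 : Matrix (Fin m) (Fin m) ℝ))⁻¹ *ᵥ (fun i => k (zs i) y))

theorem kernelMatrix_postCov {ι κ : Type*} (zs : Fin m → E) (xs : ι → E) (ys : κ → E) :
    kernelMatrix (postCov k σw zs) xs ys = kernelMatrix k xs ys -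
      (kernelMatrix k zs xs)ᴴ * (gramMatrix k zs + σw ^ 2 • (1 : Matrix (Fin m) (Fin m) ℝ))⁻¹ *
        kernelMatrix k zs ys := by
  ext i j
  simp only [kernelMatrix, postCov, Matrix.sub_apply, mul_apply, conjTranspose_apply, of_apply,
    star_trivial, dotProduct, mulVec, Finset.sum_mul, Finset.mul_sum, mul_assoc]
  rw [Finset.sum_comm]

theorem IsPSDKernel.postCov_comm (hk : IsPSDKernel k) (zs : Fin m → E) (x y : E) :
    postCov k σw zs x y = postCov k σw zs y x := by
  have hA : (gramMatrix k zs + σw ^ 2 • (1 : Matrix (Fin m) (Fin m) ℝ)).PosSemidef :=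
    (hk.posSemidef_kernelMatrix zs).add (PosSemidef.one.smul (sq_nonneg σw))
  rw [postCov, postCov, hk.1 x y, hA.isHermitian.inv.dotProduct_mulVec_comm]

theorem kernelMatrix_sumElim (hsymm : ∀ z w, k z w = k w z) {ι κ : Type*}
    (xs : ι → E) (ys : κ → E) :
    kernelMatrix k (Sum.elim xs ys) (Sum.elim xs ys) =
      fromBlocks (kernelMatrix k xs xs) (kernelMatrix k xs ys) (kernelMatrix k xs ys)ᴴ
        (kernelMatrix k ys ys) := by
  ext (i | i) (j | j) <;> simp [kernelMatrix, hsymm]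

theorem isPSDKernel_postCov (hk : IsPSDKernel k) (hσ : σw ≠ 0) (zs : Fin m → E) :
    IsPSDKernel (postCov k σw zs) := by
  refine (isPSDKernel_iff _).2 ⟨hk.postCov_comm zs, fun n xs => ?_⟩
  have hA := hk.posDef_gramMatrix_add_smul_one hσ zs
  have := hA.isUnit.invertible
  rw [kernelMatrix_postCov, ← PosDef.fromBlocks₁₁ _ _ hA]
  have hjoint := hk.posSemidef_kernelMatrix (Sum.elim zs xs)
  have hnoise : (fromBlocks (σw ^ 2 • (1 : Matrix (Fin m) (Fin m) ℝ)) 0 0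
      (0 : Matrix (Fin n) (Fin n) ℝ)).PosSemidef := by
    rw [smul_one_eq_diagonal, ← diagonal_zero, fromBlocks_diagonal]
    exact PosSemidef.diagonal fun i => by cases i <;> simp [sq_nonneg]
  have hsplit := hjoint.add hnoise
  rwa [kernelMatrix_sumElim hk.1, fromBlocks_add, add_zero, add_zero, add_zero] at hsplit

theorem IsPSDKernel.postCov_sub_two_mul_add_le (hk : IsPSDKernel k) (hσ : σw ≠ 0)
    (zs : Fin m → E) (x y : E) :
    postCov k σw zs x x - 2 * postCov k σw zs x y + postCov k σw zs y y ≤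
      k x x - 2 * k x y + k y y := by
  have hM := (hk.posDef_gramMatrix_add_smul_one hσ zs).inv.posSemidef
  have := hM.dotProduct_mulVec_nonneg ((fun i => k (zs i) x) - fun i => k (zs i) y)
  simp only [star_trivial, mulVec_sub, dotProduct_sub, sub_dotProduct,
    hM.isHermitian.dotProduct_mulVec_comm (fun i => k (zs i) y)] at this
  simp only [postCov]
  linarith

end Posterior

theorem IsPSDKernel.abs_sqrt_postVar_sub_le {k : E → E → ℝ} (hk : IsPSDKernel k) {σw : ℝ}
    (hσ : σw ≠ 0) {m : ℕ} (zs : Fin m → E) (z z' : E) :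
    |√(postVar k σw zs z) - √(postVar k σw zs z')| ≤ √(k z z - 2 * k z z' + k z' z') :=
  ((isPSDKernel_postCov hk hσ zs).abs_sqrt_sub_sqrt_le z z').trans
    (Real.sqrt_le_sqrt (hk.postCov_sub_two_mul_add_le hσ zs z z'))

theorem sub_two_mul_add_le_of_lipschitz {F : Type*} [SeminormedAddCommGroup F] {k : F → F → ℝ}
    (hsymm : ∀ z w, k z w = k w z) {L : ℝ} (hL : ∀ z z' w, |k z w - k z' w| ≤ L * ‖z - z'‖)
    (z z' : F) : k z z - 2 * k z z' + k z' z' ≤ 2 * L * ‖z - z'‖ := by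
  have h₁ := (abs_le.1 (hL z z' z)).2
  have h₂ := (abs_le.1 (hL z' z z')).2
  rw [norm_sub_rev] at h₂
  linarith [hsymm z' z]

end Kernels

theorem stmt_6_general (dz N dx : ℕ)
    (σw : ℝ) (hσw : 0 < σw) (Lk : ℝ)
    (k : EuclideanSpace ℝ (Fin dz) → EuclideanSpace ℝ (Fin dz) → ℝ)
    (hk : IsPSDKernel k)
    (hkLip : ∀ z z' w : EuclideanSpace ℝ (Fin dz), |k z w - k z' w| ≤ Lk * ‖z - z'‖)
    (zs : Fin N → EuclideanSpace ℝ (Fin dz)) :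
    ∀ z z' : EuclideanSpace ℝ (Fin dz),
      |Real.sqrt dx * Real.sqrt (postVar k σw zs z) -
          Real.sqrt dx * Real.sqrt (postVar k σw zs z')| ≤
        Real.sqrt (2 * dx * Lk) * ‖z - z'‖ ^ ((1 : ℝ) / 2) := by
  intro z z'
  have hσ := (hk.abs_sqrt_postVar_sub_le hσw.ne' zs z z').trans
    (Real.sqrt_le_sqrt (sub_two_mul_add_le_of_lipschitz hk.1 hkLip z z'))
  rw [← mul_sub, abs_mul, abs_of_nonneg (Real.sqrt_nonneg _)]
  calc √dx * |√(postVar k σw zs z) - √(postVar k σw zs z')|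
      ≤ √dx * √(2 * Lk * ‖z - z'‖) := by gcongr
    _ = √(2 * dx * Lk) * ‖z - z'‖ ^ ((1 : ℝ) / 2) := by
      rw [← Real.sqrt_eq_rpow, ← Real.sqrt_mul' _ (norm_nonneg _),
        ← Real.sqrt_mul (Nat.cast_nonneg _)]
      ring_nf

/-- Hölder continuity of the scaled posterior standard deviation `s(z) = √d_x · σ_N(z)`:
`|s(z) − s(z')| ≤ √(2 d_x L_k) ‖z − z'‖^{1/2}` for an `L_k`-Lipschitz PSD kernel. -/
theorem stmt_6 (dz N dx : ℕ) (hdz : 1 ≤ dz) (hN : 1 ≤ N) (hdx : 1 ≤ dx)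
    (σw : ℝ) (hσw : 0 < σw) (Lk : ℝ) (hLk : 0 ≤ Lk)
    (k : EuclideanSpace ℝ (Fin dz) → EuclideanSpace ℝ (Fin dz) → ℝ)
    (hk : IsPSDKernel k)
    (hkLip : ∀ z z' w : EuclideanSpace ℝ (Fin dz), |k z w - k z' w| ≤ Lk * ‖z - z'‖)
    (zs : Fin N → EuclideanSpace ℝ (Fin dz)) :
    ∀ z z' : EuclideanSpace ℝ (Fin dz),
      |Real.sqrt dx * Real.sqrt (postVar k σw zs z) -
          Real.sqrt dx * Real.sqrt (postVar k σw zs z')| ≤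
        Real.sqrt (2 * dx * Lk) * ‖z - z'‖ ^ ((1 : ℝ) / 2) :=
  stmt_6_general dz N dx σw hσw Lk k hk hkLip zs
end

section
/- Let d_z ≥ 1, N ≥ 1 be integers and σ_w > 0, L_k ≥ 0, L_μ ≥ 0 reals. Let k : ℝ^{d_z} × ℝ^{d_z} → ℝ be a symmetric positive semidefinite kernel that is L_k-Lipschitz in each argument, and let μ : ℝ^{d_z} → ℝ be L_μ-Lipschitz. Fix data points z_1, …, z_N ∈ ℝ^{d_z} and observations y ∈ ℝ^N, let K be the Gram matrix K_{ij} = k(z_i, z_j), k_v(z) ∈ ℝ^N the vector with entries k(z_i, z), and μ_Z ∈ ℝ^N the vector with entries μ(z_i). Define the Gaussian process posterior mean μ_N(z) := μ(z) + k_v(z)ᵀ (K + σ_w² I_N)⁻¹ (y − μ_Z). Then for all z, z' ∈ ℝ^{d_z}: |μ_N(z) − μ_N(z')| ≤ ( L_μ + √N · L_k · ‖y − μ_Z‖ / σ_w² ) · ‖z − z'‖, where ‖y − μ_Z‖ is the Euclidean norm in ℝ^N. -/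
/-! The posterior mean is the prior mean plus `k_v(z) ⬝ α` for the fixed weight vector
`α = (K + σ_w² I)⁻¹ (y − μ_Z)`. As `K` is positive semidefinite, the quadratic form of
`K + σ_w² I` dominates `σ_w² ‖x‖²`, which gives `‖α‖ ≤ ‖y − μ_Z‖ / σ_w²`. Each entry of
`k_v(z) − k_v(z')` is at most `L_k ‖z − z'‖` in absolute value, so its Euclidean norm is at most
`√N L_k ‖z − z'‖`, and Cauchy–Schwarz bounds `(k_v(z) − k_v(z')) ⬝ α`. -/

open Matrix

/-- The Gaussian process posterior mean
`μ_N(z) = μ(z) + k_v(z)ᵀ (K + σw² I)⁻¹ (y − μ_Z)`. -/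
noncomputable def postMean {E : Type*} (k : E → E → ℝ) (μ : E → ℝ) (σw : ℝ) {m : ℕ}
    (zs : Fin m → E) (y : Fin m → ℝ) (z : E) : ℝ :=
  μ z + (fun i => k (zs i) z) ⬝ᵥ
    ((gramMatrix k zs + σw ^ 2 • (1 : Matrix (Fin m) (Fin m) ℝ))⁻¹ *ᵥ (fun i => y i - μ (zs i)))

open WithLp

section EuclideanNorm

variable {ι : Type*} [Fintype ι]

lemma abs_dotProduct_le_norm_mul_norm (u v : ι → ℝ) :
    |u ⬝ᵥ v| ≤ ‖toLp 2 u‖ * ‖toLp 2 v‖ := by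
  simpa [EuclideanSpace.inner_toLp_toLp, mul_comm] using
    abs_real_inner_le_norm (toLp 2 v : EuclideanSpace ℝ ι) (toLp 2 u)

lemma dotProduct_self_eq_norm_sq (v : ι → ℝ) : v ⬝ᵥ v = ‖toLp 2 v‖ ^ 2 := by
  rw [← real_inner_self_eq_norm_sq (toLp 2 v : EuclideanSpace ℝ ι),
    EuclideanSpace.inner_toLp_toLp, star_trivial]

lemma norm_toLp_le_sqrt_card_mul {v : ι → ℝ} {C : ℝ} (hv : ∀ i, |v i| ≤ C) :
    ‖toLp 2 v‖ ≤ √(Fintype.card ι) * C := by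
  rcases isEmpty_or_nonempty ι with hι | ⟨⟨i₀⟩⟩
  · simp [Subsingleton.elim (toLp 2 v) 0]
  have hC : 0 ≤ C := (abs_nonneg _).trans (hv i₀)
  have hsq : ‖toLp 2 v‖ ^ 2 ≤ (√(Fintype.card ι) * C) ^ 2 := by
    rw [EuclideanSpace.norm_sq_eq, mul_pow, Real.sq_sqrt (Nat.cast_nonneg _)]
    calc ∑ i, ‖v i‖ ^ 2 ≤ ∑ _i : ι, C ^ 2 := by
          gcongr with i
          exact hv i
      _ = Fintype.card ι * C ^ 2 := by simp
  exact (pow_le_pow_iff_left₀ (norm_nonneg _) (by positivity) two_ne_zero).1 hsq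

end EuclideanNorm

namespace Matrix

variable {ι : Type*} [Fintype ι] [DecidableEq ι]

lemma PosSemidef.norm_inv_add_smul_one_mulVec_le {K : Matrix ι ι ℝ} (hK : K.PosSemidef)
    {c : ℝ} (hc : 0 < c) (v : ι → ℝ) :
    ‖toLp 2 ((K + c • 1)⁻¹ *ᵥ v)‖ ≤ ‖toLp 2 v‖ / c := by
  have hA : (K + c • 1).PosDef := PosDef.posSemidef_add hK (PosDef.one.smul hc)
  set w := (K + c • 1)⁻¹ *ᵥ v
  have hw : (K + c • 1) *ᵥ w = v := by
    rw [mulVec_mulVec, mul_nonsing_inv _ ((isUnit_iff_isUnit_det _).mp hA.isUnit),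
      one_mulVec]
  have hquad : c * ‖toLp 2 w‖ ^ 2 ≤ ‖toLp 2 w‖ * ‖toLp 2 v‖ :=
    calc c * ‖toLp 2 w‖ ^ 2 ≤ w ⬝ᵥ (K *ᵥ w) + c * ‖toLp 2 w‖ ^ 2 := by
          simpa using hK.dotProduct_mulVec_nonneg w
      _ = w ⬝ᵥ v := by
          rw [← hw, add_mulVec, dotProduct_add, smul_mulVec, one_mulVec, dotProduct_smul,
            dotProduct_self_eq_norm_sq, smul_eq_mul]
      _ ≤ ‖toLp 2 w‖ * ‖toLp 2 v‖ := (le_abs_self _).trans (abs_dotProduct_le_norm_mul_norm w v)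
  rw [le_div_iff₀ hc]
  rcases (norm_nonneg (toLp 2 w)).eq_or_lt with h0 | hpos
  · rw [← h0, zero_mul]; positivity
  · nlinarith

end Matrix

lemma IsPSDKernel.posSemidef_gramMatrix {E : Type*} {k : E → E → ℝ} (hk : IsPSDKernel k)
    {m : ℕ} (zs : Fin m → E) : (gramMatrix k zs).PosSemidef := by
  refine .of_dotProduct_mulVec_nonneg (by ext i j; simp [gramMatrix, hk.1 (zs i)]) fun c =>
    (hk.2 m zs c).trans_eq ?_
  simp only [star_trivial, dotProduct, mulVec, gramMatrix, of_apply, Finset.mul_sum]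
  exact Finset.sum_congr rfl fun i _ => Finset.sum_congr rfl fun j _ => by ring

lemma postMean_sub_postMean {E : Type*} (k : E → E → ℝ) (μ : E → ℝ) (σw : ℝ) {m : ℕ}
    (zs : Fin m → E) (y : Fin m → ℝ) (z z' : E) :
    postMean k μ σw zs y z - postMean k μ σw zs y z' =
      (μ z - μ z') + (fun i => k (zs i) z - k (zs i) z') ⬝ᵥ
        ((gramMatrix k zs + σw ^ 2 • (1 : Matrix (Fin m) (Fin m) ℝ))⁻¹ *ᵥ
          (fun i => y i - μ (zs i))) := by
  simp only [postMean, dotProduct, sub_mul, Finset.sum_sub_distrib]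
  ring

theorem stmt_7_general (dz N : ℕ)
    (σw : ℝ) (hσw : 0 < σw) (Lk Lμ : ℝ)
    (k : EuclideanSpace ℝ (Fin dz) → EuclideanSpace ℝ (Fin dz) → ℝ)
    (hk : IsPSDKernel k)
    (hkLip : ∀ z z' w : EuclideanSpace ℝ (Fin dz), |k z w - k z' w| ≤ Lk * ‖z - z'‖)
    (μ : EuclideanSpace ℝ (Fin dz) → ℝ)
    (hμLip : ∀ z z' : EuclideanSpace ℝ (Fin dz), |μ z - μ z'| ≤ Lμ * ‖z - z'‖)
    (zs : Fin N → EuclideanSpace ℝ (Fin dz)) (y : Fin N → ℝ) :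
    ∀ z z' : EuclideanSpace ℝ (Fin dz),
      |postMean k μ σw zs y z - postMean k μ σw zs y z'| ≤
        (Lμ + Real.sqrt N * Lk *
            Real.sqrt (∑ i, (y i - μ (zs i)) ^ 2) / σw ^ 2) * ‖z - z'‖ := by
  intro z z'
  set r : Fin N → ℝ := fun i => y i - μ (zs i)
  set d : Fin N → ℝ := fun i => k (zs i) z - k (zs i) z'
  have hd : ‖toLp 2 d‖ ≤ √N * (Lk * ‖z - z'‖) := by
    simpa only [Fintype.card_fin] using norm_toLp_le_sqrt_card_mul (v := d) fun i => by
      simpa only [d, hk.1 (zs i)] using hkLip z z' (zs i)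
  have hw := (hk.posSemidef_gramMatrix zs).norm_inv_add_smul_one_mulVec_le (pow_pos hσw 2) r
  have hr : ‖toLp 2 r‖ = √(∑ i, r i ^ 2) := by simp [EuclideanSpace.norm_eq]
  rw [postMean_sub_postMean]
  calc |μ z - μ z' + d ⬝ᵥ _| ≤ |μ z - μ z'| + |d ⬝ᵥ _| := abs_add_le _ _
    _ ≤ Lμ * ‖z - z'‖ + √N * (Lk * ‖z - z'‖) * (‖toLp 2 r‖ / σw ^ 2) :=
        add_le_add (hμLip z z') <| (abs_dotProduct_le_norm_mul_norm _ _).trans <|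
          mul_le_mul hd hw (norm_nonneg _) ((norm_nonneg _).trans hd)
    _ = _ := by rw [hr]; ring

/-- Lipschitz continuity of the GP posterior mean:
`|μ_N(z) − μ_N(z')| ≤ (L_μ + √N L_k ‖y − μ_Z‖ / σ_w²) ‖z − z'‖`. -/
theorem stmt_7 (dz N : ℕ) (hdz : 1 ≤ dz) (hN : 1 ≤ N)
    (σw : ℝ) (hσw : 0 < σw) (Lk Lμ : ℝ) (hLk : 0 ≤ Lk) (hLμ : 0 ≤ Lμ)
    (k : EuclideanSpace ℝ (Fin dz) → EuclideanSpace ℝ (Fin dz) → ℝ)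
    (hk : IsPSDKernel k)
    (hkLip : ∀ z z' w : EuclideanSpace ℝ (Fin dz), |k z w - k z' w| ≤ Lk * ‖z - z'‖)
    (μ : EuclideanSpace ℝ (Fin dz) → ℝ)
    (hμLip : ∀ z z' : EuclideanSpace ℝ (Fin dz), |μ z - μ z'| ≤ Lμ * ‖z - z'‖)
    (zs : Fin N → EuclideanSpace ℝ (Fin dz)) (y : Fin N → ℝ) :
    ∀ z z' : EuclideanSpace ℝ (Fin dz),
      |postMean k μ σw zs y z - postMean k μ σw zs y z'| ≤
        (Lμ + Real.sqrt N * Lk *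
            Real.sqrt (∑ i, (y i - μ (zs i)) ^ 2) / σw ^ 2) * ‖z - z'‖ :=
  stmt_7_general dz N σw hσw Lk Lμ k hk hkLip μ hμLip zs y
end

section
/- Let d_z ≥ 1, N ≥ 1 be integers and σ_w > 0. Let k : ℝ^{d_z} × ℝ^{d_z} → ℝ be a symmetric positive semidefinite kernel and fix points z_1, …, z_N ∈ ℝ^{d_z}. For t = 1, …, N let σ_{t−1}²(z_t) denote the Gaussian process posterior variance at z_t computed from the first t − 1 points (with σ_0²(z_1) := k(z_1, z_1)), and let K_N be the N×N Gram matrix (K_N)_{ij} = k(z_i, z_j). Then log det( I_N + σ_w⁻² K_N ) = ∑_{t=1}^{N} log( 1 + σ_w⁻² σ_{t−1}²(z_t) ). -/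
/-!
The matrix `K_t + σ_w² I_t` of the first `t` points has `K_{t-1} + σ_w² I_{t-1}` as its
leading block, and the Schur complement of that block is `σ_w² + σ_{t-1}²(z_t)`. Hence
`det (K_N + σ_w² I_N)` telescopes to `∏_t (σ_w² + σ_{t-1}²(z_t))`, and dividing by `σ_w^{2N}`
and taking logarithms gives the identity. The logarithms split because each factor is a ratio
of determinants of positive definite matrices.
-/

open Matrix

namespace Matrix

theorem det_eq_det_submatrix_castSucc_mul_schur {α : Type*} [CommRing α] {m : ℕ}
    (M : Matrix (Fin (m + 1)) (Fin (m + 1)) α)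
    (hA : IsUnit (M.submatrix Fin.castSucc Fin.castSucc).det) :
    M.det = (M.submatrix Fin.castSucc Fin.castSucc).det *
      (M (Fin.last m) (Fin.last m) - (fun j => M (Fin.last m) (Fin.castSucc j)) ⬝ᵥ
        ((M.submatrix Fin.castSucc Fin.castSucc)⁻¹ *ᵥ
          fun i => M (Fin.castSucc i) (Fin.last m))) := by
  let e : Fin m ⊕ Fin 1 ≃ Fin (m + 1) := finSumFinEquiv
  have : Invertible (M.submatrix e e).toBlocks₁₁ := invertibleOfIsUnitDet _ hA
  rw [← det_submatrix_equiv_self e M, ← fromBlocks_toBlocks (M.submatrix e e),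
    det_fromBlocks₁₁, invOf_eq_nonsing_inv, det_fin_one]
  congr 1
  simp only [sub_apply, mul_apply, dotProduct, mulVec, Finset.sum_mul, Finset.mul_sum, mul_assoc]
  rw [Finset.sum_comm]
  rfl

end Matrix

section RegularizedGram

variable {E : Type*} {k : E → E → ℝ} {σw : ℝ}

noncomputable def regularizedGram (k : E → E → ℝ) (σw : ℝ) {m : ℕ} (zs : Fin m → E) :
    Matrix (Fin m) (Fin m) ℝ :=
  gramMatrix k zs + σw ^ 2 • (1 : Matrix (Fin m) (Fin m) ℝ)

theorem regularizedGram_comp {m n : ℕ} (zs : Fin m → E) {e : Fin n → Fin m}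
    (he : Function.Injective e) :
    regularizedGram k σw (zs ∘ e) = (regularizedGram k σw zs).submatrix e e := by
  ext i j
  simp [regularizedGram, gramMatrix, one_apply, he.eq_iff]

theorem gramMatrix_posSemidef (hk : IsPSDKernel k) {m : ℕ} (zs : Fin m → E) :
    (gramMatrix k zs).PosSemidef := by
  refine .of_dotProduct_mulVec_nonneg (Matrix.ext fun i j => hk.1 (zs j) (zs i)) fun c => ?_
  refine (hk.2 m zs c).trans_eq ?_
  simp only [gramMatrix, dotProduct, mulVec, of_apply, star_trivial, Finset.mul_sum]
  exact Finset.sum_congr rfl fun i _ => Finset.sum_congr rfl fun j _ => by ring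

theorem regularizedGram_posDef (hk : IsPSDKernel k) (hσw : σw ≠ 0) {m : ℕ} (zs : Fin m → E) :
    (regularizedGram k σw zs).PosDef :=
  PosDef.posSemidef_add (gramMatrix_posSemidef hk zs) (PosDef.one.smul (pow_two_pos_of_ne_zero hσw))

theorem det_regularizedGram_succ (hk : IsPSDKernel k) (hσw : σw ≠ 0) {m : ℕ}
    (zs : Fin (m + 1) → E) :
    (regularizedGram k σw zs).det = (regularizedGram k σw (Fin.init zs)).det *
      (σw ^ 2 + postVar k σw (Fin.init zs) (zs (Fin.last m))) := by
  have hinit : regularizedGram k σw (Fin.init zs) =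
      (regularizedGram k σw zs).submatrix Fin.castSucc Fin.castSucc :=
    regularizedGram_comp zs (Fin.castSucc_injective m)
  have hunit : IsUnit (regularizedGram k σw (Fin.init zs)).det :=
    (regularizedGram_posDef hk hσw _).det_pos.ne'.isUnit
  rw [det_eq_det_submatrix_castSucc_mul_schur _ (hinit ▸ hunit), ← hinit]
  congr 1
  simp only [postVar, regularizedGram, gramMatrix, Matrix.add_apply, Matrix.smul_apply, of_apply,
    smul_eq_mul, one_apply_eq, one_apply_ne (Fin.castSucc_ne_last _),
    one_apply_ne' (Fin.castSucc_ne_last _), mul_one, mul_zero, add_zero, Fin.init,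
    hk.1 (zs (Fin.last m))]
  ring

theorem sq_add_postVar_pos (hk : IsPSDKernel k) (hσw : σw ≠ 0) {m : ℕ} (zs : Fin m → E)
    (z : E) : 0 < σw ^ 2 + postVar k σw zs z := by
  have h := det_regularizedGram_succ hk hσw (Fin.snoc zs z)
  rw [Fin.init_snoc, Fin.snoc_last] at h
  exact (mul_pos_iff_of_pos_left (regularizedGram_posDef hk hσw zs).det_pos).mp
    (h ▸ (regularizedGram_posDef hk hσw _).det_pos)

theorem det_regularizedGram_eq_prod (hk : IsPSDKernel k) (hσw : σw ≠ 0) {n : ℕ}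
    (zs : Fin n → E) :
    (regularizedGram k σw zs).det = ∏ t : Fin n,
      (σw ^ 2 + postVar k σw (fun i : Fin t => zs (Fin.castLE t.isLt.le i)) (zs t)) := by
  induction n with
  | zero => simp
  | succ n ih =>
    rw [det_regularizedGram_succ hk hσw, ih, Fin.prod_univ_castSucc]
    rfl

end RegularizedGram

theorem stmt_13_general (dz N : ℕ)
    (σw : ℝ) (hσw : 0 < σw)
    (k : EuclideanSpace ℝ (Fin dz) → EuclideanSpace ℝ (Fin dz) → ℝ)
    (hk : IsPSDKernel k)
    (zs : Fin N → EuclideanSpace ℝ (Fin dz)) :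
    Real.log (Matrix.det (1 + (σw ^ 2)⁻¹ • gramMatrix k zs)) =
      ∑ t : Fin N,
        Real.log (1 + (σw ^ 2)⁻¹ *
          postVar k σw (fun i : Fin t.val => zs (Fin.castLE t.isLt.le i)) (zs t)) := by
  have hσ : σw ^ 2 ≠ 0 := pow_ne_zero 2 hσw.ne'
  have hscale : ∀ v : ℝ, 1 + (σw ^ 2)⁻¹ * v = (σw ^ 2)⁻¹ * (σw ^ 2 + v) := fun v => by
    rw [mul_add, inv_mul_cancel₀ hσ]
  have hmat : 1 + (σw ^ 2)⁻¹ • gramMatrix k zs = (σw ^ 2)⁻¹ • regularizedGram k σw zs := by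
    rw [regularizedGram, smul_add, smul_smul, inv_mul_cancel₀ hσ, one_smul, add_comm]
  rw [hmat, det_smul, det_regularizedGram_eq_prod hk hσw.ne', ← Finset.card_univ,
    Finset.pow_card_mul_prod, Real.log_prod]
  · simp only [hscale]
  · intro t _
    exact (mul_pos (inv_pos.mpr (pow_pos hσw 2)) (sq_add_postVar_pos hk hσw.ne' _ _)).ne'

/-- The log-determinant of `I + σ_w⁻² K_N` decomposes as a sum of sequential posterior
variance terms: `log det(I + σ_w⁻² K_N) = ∑_{t=1}^N log(1 + σ_w⁻² σ_{t−1}²(z_t))`. -/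
theorem stmt_13 (dz N : ℕ) (hdz : 1 ≤ dz) (hN : 1 ≤ N)
    (σw : ℝ) (hσw : 0 < σw)
    (k : EuclideanSpace ℝ (Fin dz) → EuclideanSpace ℝ (Fin dz) → ℝ)
    (hk : IsPSDKernel k)
    (zs : Fin N → EuclideanSpace ℝ (Fin dz)) :
    Real.log (Matrix.det (1 + (σw ^ 2)⁻¹ • gramMatrix k zs)) =
      ∑ t : Fin N,
        Real.log (1 + (σw ^ 2)⁻¹ *
          postVar k σw (fun i : Fin t.val => zs (Fin.castLE t.isLt.le i)) (zs t)) :=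
  stmt_13_general dz N σw hσw k hk zs
end
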